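/- Identifiability of the SNSS.jd functional (Proposition 2(1), sufficiency). Let p ≥ 1, let A be an invertible real p×p matrix, let Λ₀ be a diagonal p×p matrix with strictly positive diagonal entries, and let Λ₁,…,Λ_K be diagonal p×p matrices such that for every pair i ≠ j there exists k ∈ {1,…,K} with (Λ_k)ᵢᵢ/(Λ₀)ᵢᵢ ≠ (Λ_k)ⱼⱼ/(Λ₀)ⱼⱼ. Set M₀ = A Λ₀ Aᵀ and M_k = A Λ_k Aᵀ for k = 1,…,K. If U is an orthogonal p×p matrix such that U M₀^{-1/2} M_k M₀^{-1/2} Uᵀ is diagonal for every k = 1,…,K, then there exists a signed permutation matrix Q such that U M₀^{-1/2} A = Q Λ₀^{-1/2}; in particular U M₀^{-1/2} A is a generalized permutation matrix. -/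

import Mathlib

open Matrix

/-- A signed permutation matrix: exactly one nonzero entry in each row and each
column, each such entry being `1` or `-1`. -/
def IsSignedPerm {p : ℕ} (Q : Matrix (Fin p) (Fin p) ℝ) : Prop :=
  (∀ i, ∃! j, Q i j ≠ 0) ∧ (∀ j, ∃! i, Q i j ≠ 0) ∧
  (∀ i j, Q i j ≠ 0 → Q i j = 1 ∨ Q i j = -1)

/-- A generalized permutation matrix: exactly one nonzero entry in each row and
each column. -/
def IsGenPerm {p : ℕ} (Q : Matrix (Fin p) (Fin p) ℝ) : Prop :=
  (∀ i, ∃! j, Q i j ≠ 0) ∧ (∀ j, ∃! i, Q i j ≠ 0)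

open scoped Classical in
/-- For a symmetric positive (semi)definite matrix `M`, `invSqrt M` is the inverse
of its unique positive semidefinite square root, i.e. `M^{-1/2}`. -/
noncomputable def invSqrt {p : ℕ} (M : Matrix (Fin p) (Fin p) ℝ) : Matrix (Fin p) (Fin p) ℝ :=
  if h : M.PosSemidef then
    ((h.1.eigenvectorUnitary : Matrix (Fin p) (Fin p) ℝ) *
      diagonal (fun i => Real.sqrt (h.1.eigenvalues i)) *
      (star (h.1.eigenvectorUnitary : Matrix (Fin p) (Fin p) ℝ)))⁻¹ else 0

private lemma posDef_conj {p : ℕ} {A M : Matrix (Fin p) (Fin p) ℝ}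
    (hM : M.PosDef) (hA : IsUnit A) : (A * M * Aᵀ).PosDef := by
  simpa [conjTranspose_eq_transpose_of_trivial] using
    hM.mul_mul_conjTranspose_same (B := A) (Matrix.vecMul_injective_iff_isUnit.mpr hA)

private lemma sqrt_aux {p : ℕ} (M : Matrix (Fin p) (Fin p) ℝ) (hpsd : M.PosSemidef) :
    let S := ((hpsd.1.eigenvectorUnitary : Matrix (Fin p) (Fin p) ℝ) *
      diagonal (fun i => Real.sqrt (hpsd.1.eigenvalues i)) *
      (star (hpsd.1.eigenvectorUnitary : Matrix (Fin p) (Fin p) ℝ)))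
    S * S = M ∧ Sᵀ = S := by
  intro S
  have hstar : ∀ X : Matrix (Fin p) (Fin p) ℝ, star X = Xᵀ := fun X => by
    rw [star_eq_conjTranspose, conjTranspose_eq_transpose_of_trivial]
  have hUU : star (hpsd.1.eigenvectorUnitary : Matrix (Fin p) (Fin p) ℝ) *
      (hpsd.1.eigenvectorUnitary : Matrix (Fin p) (Fin p) ℝ) = 1 := Unitary.coe_star_mul_self _
  constructor
  · have hsp := hpsd.1.spectral_theorem
    rw [Unitary.conjStarAlgAut_apply] at hsp
    conv_rhs => rw [hsp]
    simp only [S, Matrix.mul_assoc]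
    rw [← Matrix.mul_assoc _ _ (diagonal _ * _), hUU, Matrix.one_mul, ← Matrix.mul_assoc (diagonal _),
      diagonal_mul_diagonal]
    congr 3
    funext i
    simp [Real.mul_self_sqrt (hpsd.eigenvalues_nonneg i)]
  · simp only [S, transpose_mul, diagonal_transpose, hstar, transpose_transpose, Matrix.mul_assoc]

/-- Identifiability of the SNSS.jd functional (sufficiency). -/
theorem snss_jd_identifiable {p K : ℕ} (hp : 1 ≤ p)
    (A Λ₀ U : Matrix (Fin p) (Fin p) ℝ) (Λ : Fin K → Matrix (Fin p) (Fin p) ℝ)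
    (hA : IsUnit A)
    (hΛ₀ : Λ₀.IsDiag) (hΛ₀pos : ∀ i, 0 < Λ₀ i i)
    (hΛ : ∀ k, (Λ k).IsDiag)
    (hsep : ∀ i j, i ≠ j → ∃ k, Λ k i i / Λ₀ i i ≠ Λ k j j / Λ₀ j j)
    (hU : U * Uᵀ = 1)
    (hdiag : ∀ k, (U * invSqrt (A * Λ₀ * Aᵀ) * (A * Λ k * Aᵀ) *
      invSqrt (A * Λ₀ * Aᵀ) * Uᵀ).IsDiag) :
    (∃ Q : Matrix (Fin p) (Fin p) ℝ, IsSignedPerm Q ∧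
      U * invSqrt (A * Λ₀ * Aᵀ) * A = Q * Matrix.diagonal (fun i => (Real.sqrt (Λ₀ i i))⁻¹)) ∧
    IsGenPerm (U * invSqrt (A * Λ₀ * Aᵀ) * A) := by
  classical
  -- basic setup
  have hΛ₀eq : Matrix.diagonal (fun i => Λ₀ i i) = Λ₀ := hΛ₀.diagonal_diag
  have hM₀ : (A * Λ₀ * Aᵀ).PosDef := by
    refine posDef_conj ?_ hA
    rw [← hΛ₀eq]
    exact Matrix.PosDef.diagonal hΛ₀pos
  have hpsd : (A * Λ₀ * Aᵀ).PosSemidef := hM₀.posSemidef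
  set S : Matrix (Fin p) (Fin p) ℝ := ((hpsd.1.eigenvectorUnitary : Matrix (Fin p) (Fin p) ℝ) *
      diagonal (fun i => Real.sqrt (hpsd.1.eigenvalues i)) *
      (star (hpsd.1.eigenvectorUnitary : Matrix (Fin p) (Fin p) ℝ))) with hSdef
  have hinv : invSqrt (A * Λ₀ * Aᵀ) = S⁻¹ := dif_pos hpsd
  have hSS : S * S = A * Λ₀ * Aᵀ := (sqrt_aux _ hpsd).1
  have hSsymm : Sᵀ = S := by
    exact (sqrt_aux _ hpsd).2
  have hSdetUnit : IsUnit S.det := by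
    have hdet : S.det * S.det = (A * Λ₀ * Aᵀ).det := by
      rw [← Matrix.det_mul, hSS]
    have hne : (A * Λ₀ * Aᵀ).det ≠ 0 := hM₀.det_pos.ne'
    refine isUnit_iff_ne_zero.mpr fun h => hne ?_
    rw [← hdet, h, zero_mul]
  have hS1 : S⁻¹ * S = 1 := Matrix.nonsing_inv_mul S hSdetUnit
  have hS2 : S * S⁻¹ = 1 := Matrix.mul_nonsing_inv S hSdetUnit
  have hSinvsymm : (S⁻¹)ᵀ = S⁻¹ := by
    rw [Matrix.transpose_nonsing_inv, hSsymm]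
  -- the matrix W
  set W : Matrix (Fin p) (Fin p) ℝ := U * S⁻¹ * A with hWdef
  have hWT : Wᵀ = Aᵀ * (S⁻¹ * Uᵀ) := by
    rw [hWdef, transpose_mul, transpose_mul, hSinvsymm]
  have hM₀X : ∀ X : Matrix (Fin p) (Fin p) ℝ,
      A * (Λ₀ * (Aᵀ * X)) = S * (S * X) := by
    intro X
    calc A * (Λ₀ * (Aᵀ * X)) = (A * Λ₀ * Aᵀ) * X := by
          simp only [Matrix.mul_assoc]
      _ = (S * S) * X := by rw [hSS]
      _ = S * (S * X) := by rw [Matrix.mul_assoc]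
  have hWΛ₀ : W * (Λ₀ * Wᵀ) = 1 := by
    calc W * (Λ₀ * Wᵀ)
        = U * (S⁻¹ * (A * (Λ₀ * (Aᵀ * (S⁻¹ * Uᵀ))))) := by
          rw [hWdef, hWT]; simp only [Matrix.mul_assoc]
      _ = U * (S⁻¹ * (S * (S * (S⁻¹ * Uᵀ)))) := by rw [hM₀X]
      _ = U * Uᵀ := by
          rw [← Matrix.mul_assoc S S⁻¹ Uᵀ, hS2, Matrix.one_mul,
            ← Matrix.mul_assoc S⁻¹ S Uᵀ, hS1, Matrix.one_mul]
      _ = 1 := hU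
  -- diagonal targets
  set D : Fin K → Matrix (Fin p) (Fin p) ℝ := fun k => W * (Λ k * Wᵀ) with hDdef
  have hDdiag : ∀ k, (D k).IsDiag := by
    intro k
    have h := hdiag k
    have heq : U * invSqrt (A * Λ₀ * Aᵀ) * (A * Λ k * Aᵀ) * invSqrt (A * Λ₀ * Aᵀ) * Uᵀ
        = D k := by
      rw [hinv, hDdef, hWdef, hWT]
      simp only [Matrix.mul_assoc]
    rwa [heq] at h
  -- V = W Λ₀^{1/2}
  set s : Fin p → ℝ := fun i => Real.sqrt (Λ₀ i i) with hsdef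
  have hspos : ∀ i, 0 < s i := fun i => Real.sqrt_pos.mpr (hΛ₀pos i)
  have hss : ∀ i, s i * s i = Λ₀ i i := fun i => Real.mul_self_sqrt (hΛ₀pos i).le
  set V : Matrix (Fin p) (Fin p) ℝ := W * Matrix.diagonal s with hVdef
  have hVT : Vᵀ = Matrix.diagonal s * Wᵀ := by
    rw [hVdef, transpose_mul, Matrix.diagonal_transpose]
  have hVVT : V * Vᵀ = 1 := by
    calc V * Vᵀ = W * (Matrix.diagonal s * (Matrix.diagonal s * Wᵀ)) := by
          rw [hVdef, hVT, Matrix.mul_assoc]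
      _ = W * (Λ₀ * Wᵀ) := by
          rw [← Matrix.mul_assoc (Matrix.diagonal s), Matrix.diagonal_mul_diagonal]
          refine congrArg (fun X => W * (X * Wᵀ)) ?_
          rw [← hΛ₀eq]
          exact congrArg Matrix.diagonal (funext hss)
      _ = 1 := hWΛ₀
  have hVTV : Vᵀ * V = 1 := mul_eq_one_comm.mp hVVT
  -- the relation V δₖ = Dₖ V
  set δ : Fin K → Fin p → ℝ := fun k j => Λ k j j / Λ₀ j j with hδdef
  have hVdelta : ∀ k, V * Matrix.diagonal (δ k) = D k * V := by
    intro k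
    have h1 : V * (Matrix.diagonal (δ k) * Vᵀ) = D k := by
      rw [hVdef, hVT]
      simp only [Matrix.mul_assoc]
      rw [← Matrix.mul_assoc (Matrix.diagonal (δ k)) (Matrix.diagonal s) Wᵀ,
        Matrix.diagonal_mul_diagonal,
        ← Matrix.mul_assoc (Matrix.diagonal s) _ Wᵀ, Matrix.diagonal_mul_diagonal]
      show _ = W * (Λ k * Wᵀ)
      refine congrArg (fun X => W * (X * Wᵀ)) ?_
      rw [← (hΛ k).diagonal_diag]
      refine congrArg Matrix.diagonal (funext fun j => ?_)
      show s j * (δ k j * s j) = Λ k j j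
      have h2 : s j * (δ k j * s j) = Λ k j j / Λ₀ j j * (s j * s j) := by
        simp only [hδdef]; ring
      rw [h2, hss, div_mul_cancel₀ _ (hΛ₀pos j).ne']
    calc V * Matrix.diagonal (δ k)
        = V * Matrix.diagonal (δ k) * (Vᵀ * V) := by rw [hVTV, Matrix.mul_one]
      _ = V * (Matrix.diagonal (δ k) * Vᵀ) * V := by simp only [Matrix.mul_assoc]
      _ = D k * V := by rw [h1]
  -- entrywise consequence
  have hrel : ∀ k i j, V i j ≠ 0 → δ k j = D k i i := by
    intro k i j hV0
    have h := congrFun (congrFun (hVdelta k) i) j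
    have hL : (V * Matrix.diagonal (δ k)) i j = V i j * δ k j := Matrix.mul_diagonal _ _ _ _
    have hR : (D k * V) i j = D k i i * V i j := by
      conv_lhs => rw [← (hDdiag k).diagonal_diag]
      exact Matrix.diagonal_mul _ _ _ _
    rw [hL, hR] at h
    exact mul_left_cancel₀ hV0
      (show V i j * δ k j = V i j * D k i i by rw [h, mul_comm])
  -- norm facts
  have hrow_norm : ∀ i, (∑ j, V i j * V i j) = 1 := by
    intro i
    have := congrFun (congrFun hVVT i) i
    rw [Matrix.mul_apply] at this
    simpa [Matrix.transpose_apply] using this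
  have hcol_norm : ∀ j, (∑ i, V i j * V i j) = 1 := by
    intro j
    have := congrFun (congrFun hVTV j) j
    rw [Matrix.mul_apply] at this
    simpa [Matrix.transpose_apply] using this
  have hrow_ex : ∀ i, ∃ j, V i j ≠ 0 := by
    intro i
    by_contra h
    push_neg at h
    have := hrow_norm i
    rw [Finset.sum_eq_zero (fun j _ => by rw [h j, mul_zero])] at this
    exact zero_ne_one this
  have hcol_ex : ∀ j, ∃ i, V i j ≠ 0 := by
    intro j
    by_contra h
    push_neg at h
    have := hcol_norm j
    rw [Finset.sum_eq_zero (fun i _ => by rw [h i, mul_zero])] at this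
    exact zero_ne_one this
  have hrow_uniq : ∀ i j j', V i j ≠ 0 → V i j' ≠ 0 → j = j' := by
    intro i j j' h1 h2
    by_contra hne
    obtain ⟨k, hk⟩ := hsep j j' hne
    exact hk ((hrel k i j h1).trans (hrel k i j' h2).symm)
  have hcol_uniq : ∀ i i' j, V i j ≠ 0 → V i' j ≠ 0 → i = i' := by
    intro i i' j h1 h2
    by_contra hne
    have horth := congrFun (congrFun hVVT i) i'
    rw [Matrix.mul_apply] at horth
    have hone : (1 : Matrix (Fin p) (Fin p) ℝ) i i' = 0 := Matrix.one_apply_ne hne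
    rw [hone] at horth
    have hsum : (∑ l, V i l * Vᵀ l i') = V i j * V i' j := by
      rw [Finset.sum_eq_single j]
      · rfl
      · intro l _ hl
        have : V i l = 0 := by
          by_contra h
          exact hl (hrow_uniq i l j h h1)
        rw [this, zero_mul]
      · intro h; exact absurd (Finset.mem_univ j) h
    rw [hsum] at horth
    exact mul_ne_zero h1 h2 horth
  have hsign : ∀ i j, V i j ≠ 0 → V i j = 1 ∨ V i j = -1 := by
    intro i j hV0
    have h := hrow_norm i
    have hsum : (∑ l, V i l * V i l) = V i j * V i j := by
      rw [Finset.sum_eq_single j]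
      · intro l _ hl
        have : V i l = 0 := by
          by_contra h'
          exact hl (hrow_uniq i l j h' hV0)
        rw [this, zero_mul]
      · intro h'; exact absurd (Finset.mem_univ j) h'
    rw [hsum] at h
    exact mul_self_eq_one_iff.mp h
  have hVsp : IsSignedPerm V := by
    refine ⟨fun i => ?_, fun j => ?_, hsign⟩
    · obtain ⟨j, hj⟩ := hrow_ex i
      exact ⟨j, hj, fun j' hj' => hrow_uniq i j' j hj' hj⟩
    · obtain ⟨i, hi⟩ := hcol_ex j
      exact ⟨i, hi, fun i' hi' => hcol_uniq i' i j hi' hi⟩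
  -- conclude
  have hWV : U * invSqrt (A * Λ₀ * Aᵀ) * A
      = V * Matrix.diagonal (fun i => (Real.sqrt (Λ₀ i i))⁻¹) := by
    rw [hinv, ← hWdef, hVdef, Matrix.mul_assoc, Matrix.diagonal_mul_diagonal]
    have hone : Matrix.diagonal (fun i => s i * (Real.sqrt (Λ₀ i i))⁻¹)
        = (1 : Matrix (Fin p) (Fin p) ℝ) := by
      rw [← Matrix.diagonal_one]
      exact congrArg Matrix.diagonal (funext fun i => mul_inv_cancel₀ (hspos i).ne')
    rw [hone, Matrix.mul_one]
  have hWne : ∀ i j, (U * invSqrt (A * Λ₀ * Aᵀ) * A) i j ≠ 0 ↔ V i j ≠ 0 := by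
    intro i j
    rw [hWV, Matrix.mul_diagonal]
    constructor
    · intro h h0; exact h (by rw [h0, zero_mul])
    · intro h
      exact mul_ne_zero h (inv_ne_zero (hspos j).ne')
  refine ⟨⟨V, hVsp, hWV⟩, ?_, ?_⟩
  · intro i
    obtain ⟨j, hj⟩ := hrow_ex i
    exact ⟨j, (hWne i j).mpr hj, fun j' hj' => hrow_uniq i j' j ((hWne i j').mp hj') hj⟩
  · intro j
    obtain ⟨i, hi⟩ := hcol_ex j
    exact ⟨i, (hWne i j).mpr hi, fun i' hi' => hcol_uniq i' i j ((hWne i' j).mp hi') hi⟩
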